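/- If an inverse system of groups (G_h) satisfies the Mittag-Leffler condition, then the inverse system of commutator subgroups ([G_h, G_h]) also satisfies the Mittag-Leffler condition. -/
import Mathlib


/-- The Mittag-Leffler condition for an inverse system of groups indexed by `ℤ`. -/
def MittagLeffler (G : ℤ → Type*) [∀ h, Group (G h)]
    (T : ∀ ⦃h h' : ℤ⦄, h ≤ h' → (G h →* G h')) : Prop :=
  ∀ h₀ : ℤ, ∃ h₁ : ℤ, ∃ h₁le : h₁ ≤ h₀, ∀ (h : ℤ) (hh : h ≤ h₁),
    (T (hh.trans h₁le)).range = (T h₁le).range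

/-- If an inverse system of groups `(G_h)` satisfies the Mittag-Leffler condition,
then the inverse system of commutator subgroups `([G_h, G_h])` (with the restricted
transition maps) also satisfies the Mittag-Leffler condition: the images of the
commutator subgroups under the transition maps stabilize. -/
theorem mittagLeffler_commutator (G : ℤ → Type*) [∀ h, Group (G h)]
    (T : ∀ ⦃h h' : ℤ⦄, h ≤ h' → (G h →* G h'))
    (Hid : ∀ h : ℤ, T (le_refl h) = MonoidHom.id (G h))
    (Hcomp : ∀ ⦃h h' h'' : ℤ⦄ (a : h ≤ h') (b : h' ≤ h''),
      (T b).comp (T a) = T (a.trans b))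
    (ML : MittagLeffler G T) :
    ∀ h₀ : ℤ, ∃ h₁ : ℤ, ∃ h₁le : h₁ ≤ h₀, ∀ (h : ℤ) (hh : h ≤ h₁),
      (commutator (G h)).map (T (hh.trans h₁le)) = (commutator (G h₁)).map (T h₁le) := by
  intro h₀
  obtain ⟨h₁, h₁le, hr⟩ := ML h₀
  refine ⟨h₁, h₁le, fun h hh => ?_⟩
  rw [commutator_def, commutator_def, Subgroup.map_commutator, Subgroup.map_commutator,
    ← MonoidHom.range_eq_map, ← MonoidHom.range_eq_map, hr h hh]
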